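/- Let Z (latent states), ι (buckets), and X' (unconstrained variables) be finite types, and for each B : ι let X B be a finite type. Given a pmf w on Z, for each z : Z a pmf p' z on X', and for each z : Z and B : ι pmfs pB z B and qB z B on X B, define p and q on X' × (Π B : ι, X B) by p (x', x) = ∑ z, w z * p' z x' * ∏ B, pB z B (x B) and q (x', x) = ∑ z, w z * p' z x' * ∏ B, qB z B (x B); these are pmfs. Assume w z > 0 for all z, p' z x' > 0 for all z and x', and qB z B y > 0 for all z, B, y. Then H(p, q) ≤ ∑ B, ∑ z, w z * H(pB z B, qB z B) + H(r), where r is the pmf on Z × X' defined by r (z, x') = w z * p' z x'. -/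

import Mathlib

/-!
Bound `-log q` at each point by `-log` of a single mixture component: every component is at
most the whole sum, so the cross-entropy of the mixtures is at most the `p`-weighted average of
the component cross-entropies. For a fixed latent state the component is a product of the factor
`w z * p' z x'` with the bucket distributions, so its logarithm splits and the average becomes
the entropy of `(Z, X')` plus the expected per-bucket cross-entropies.
-/

open Finset Real

theorem sum_sum_mul_mul_neg_log_mul_mul {U V : Type*} [Fintype U] [Fintype V]
    (a b : U → ℝ) (P Q : V → ℝ) (hb : ∀ u, b u ≠ 0) (hQ : ∀ v, Q v ≠ 0) :
    ∑ u, ∑ v, a u * P v * -log (b u * Q v) =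
      (∑ v, P v) * ∑ u, a u * -log (b u) + (∑ u, a u) * ∑ v, P v * -log (Q v) := by
  have h (u : U) (v : V) : a u * P v * -log (b u * Q v) =
      P v * (a u * -log (b u)) + a u * (P v * -log (Q v)) := by
    rw [log_mul (hb u) (hQ v)]; ring
  simp only [h, sum_add_distrib, mul_sum, sum_mul]
  rw [sum_comm (f := fun u v => a u * (P v * -log (Q v)))]

section ProductDistribution

variable {ι : Type*} [Fintype ι] [DecidableEq ι] {X : ι → Type*} [∀ i, Fintype (X i)]

theorem sum_pi_prod_mul_apply {f : ∀ i, X i → ℝ} (hf : ∀ i, ∑ y, f i y = 1)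
    (j : ι) (g : X j → ℝ) :
    ∑ x : ∀ i, X i, (∏ i, f i (x i)) * g (x j) = ∑ y, f j y * g y := by
  have hg (x : ∀ i, X i) : ∏ i, (Pi.mulSingle j g : ∀ i, X i → ℝ) i (x i) = g (x j) :=
    (Fintype.prod_eq_single j fun i hi => by rw [Pi.mulSingle_eq_of_ne hi, Pi.one_apply]).trans
      (by rw [Pi.mulSingle_eq_same])
  calc ∑ x : ∀ i, X i, (∏ i, f i (x i)) * g (x j)
      = ∑ x : ∀ i, X i, ∏ i, f i (x i) * (Pi.mulSingle j g : ∀ i, X i → ℝ) i (x i) := by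
        simp only [prod_mul_distrib, hg]
    _ = ∏ i, ∑ y, f i y * (Pi.mulSingle j g : ∀ i, X i → ℝ) i y := by rw [Fintype.prod_sum]
    _ = ∑ y, f j y * g y := by
        rw [Fintype.prod_eq_single j fun i hi => by
          simp only [Pi.mulSingle_eq_of_ne hi, Pi.one_apply, mul_one, hf]]
        simp only [Pi.mulSingle_eq_same]

theorem sum_pi_prod_mul_sum_apply {f : ∀ i, X i → ℝ} (hf : ∀ i, ∑ y, f i y = 1)
    (g : ∀ i, X i → ℝ) :
    ∑ x : ∀ i, X i, (∏ i, f i (x i)) * ∑ i, g i (x i) = ∑ i, ∑ y, f i y * g i y := by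
  simp only [mul_sum]
  rw [sum_comm]
  exact sum_congr rfl fun i _ => sum_pi_prod_mul_apply hf i (g i)

theorem sum_pi_prod_mul_neg_log_prod {p q : ∀ i, X i → ℝ} (hp : ∀ i, ∑ y, p i y = 1)
    (hq : ∀ i y, q i y ≠ 0) :
    ∑ x : ∀ i, X i, (∏ i, p i (x i)) * -log (∏ i, q i (x i)) =
      ∑ i, ∑ y, p i y * -log (q i y) := by
  simp only [log_prod fun i _ => hq i _, ← sum_neg_distrib]
  exact sum_pi_prod_mul_sum_apply hp fun i y => -log (q i y)

theorem sum_sum_mul_prod_mul_neg_log_mul_prod {U : Type*} [Fintype U] (r : U → ℝ)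
    (hr : ∀ u, r u ≠ 0) {p q : ∀ i, X i → ℝ} (hp : ∀ i, ∑ y, p i y = 1) (hq : ∀ i y, q i y ≠ 0) :
    ∑ u, ∑ x : ∀ i, X i, r u * (∏ i, p i (x i)) * -log (r u * ∏ i, q i (x i)) =
      (∑ u, r u) * ∑ i, ∑ y, p i y * -log (q i y) + ∑ u, r u * -log (r u) := by
  have hP : ∑ x : ∀ i, X i, ∏ i, p i (x i) = 1 := by
    simp only [← Fintype.prod_sum, hp, prod_const_one]
  rw [sum_sum_mul_mul_neg_log_mul_mul _ _ _ _ hr fun x => prod_ne_zero_iff.mpr fun i _ => hq i _,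
    sum_pi_prod_mul_neg_log_prod hp hq, hP, one_mul, add_comm]

end ProductDistribution

theorem sum_mul_neg_log_sum_le {α : Type*} (s : Finset α) {a b : α → ℝ}
    (ha : ∀ i ∈ s, 0 ≤ a i) (hb : ∀ i ∈ s, 0 < b i) :
    (∑ i ∈ s, a i) * -log (∑ i ∈ s, b i) ≤ ∑ i ∈ s, a i * -log (b i) := by
  rw [sum_mul]
  refine sum_le_sum fun i hi => mul_le_mul_of_nonneg_left ?_ (ha i hi)
  exact neg_le_neg (log_le_log (hb i hi) (single_le_sum (fun j hj => (hb j hj).le) hi))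

theorem pc_cross_entropy_bound_general
    {Z ι X' : Type*} [Fintype Z] [Fintype ι] [Fintype X'] [DecidableEq ι]
    (X : ι → Type*) [∀ B, Fintype (X B)]
    (w : Z → ℝ) (hw0 : ∀ z, 0 < w z)
    (p' : Z → X' → ℝ) (hp'0 : ∀ z x', 0 < p' z x') (hp'1 : ∀ z, ∑ x', p' z x' = 1)
    (pB qB : Z → ∀ B, X B → ℝ)
    (hpB0 : ∀ z B y, 0 ≤ pB z B y) (hpB1 : ∀ z B, ∑ y, pB z B y = 1)
    (hqB0 : ∀ z B y, 0 < qB z B y) :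
    -∑ x' : X', ∑ x : (∀ B, X B),
        (∑ z, w z * p' z x' * ∏ B, pB z B (x B)) *
          Real.log (∑ z, w z * p' z x' * ∏ B, qB z B (x B)) ≤
      ∑ B, ∑ z, w z * (-∑ y, pB z B y * Real.log (qB z B y)) +
        (-∑ z, ∑ x', (w z * p' z x') * Real.log (w z * p' z x')) := by
  have hr0 (z : Z) (x' : X') : 0 < w z * p' z x' := mul_pos (hw0 z) (hp'0 z x')
  have hQ0 (z : Z) (x : ∀ B, X B) : 0 < ∏ B, qB z B (x B) := prod_pos fun B _ => hqB0 z B _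
  have component (z : Z) :
      ∑ x', ∑ x : ∀ B, X B, w z * p' z x' * (∏ B, pB z B (x B)) *
          -log (w z * p' z x' * ∏ B, qB z B (x B)) =
        ∑ B, w z * (-∑ y, pB z B y * log (qB z B y)) +
          ∑ x', w z * p' z x' * -log (w z * p' z x') := by
    rw [sum_sum_mul_prod_mul_neg_log_mul_prod _ (fun x' => (hr0 z x').ne') (hpB1 z)
      fun B y => (hqB0 z B y).ne', ← mul_sum, hp'1, mul_one, mul_sum]
    simp only [sum_neg_distrib, mul_neg]
  calc _ = ∑ x' : X', ∑ x : ∀ B, X B, (∑ z, w z * p' z x' * ∏ B, pB z B (x B)) *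
          -log (∑ z, w z * p' z x' * ∏ B, qB z B (x B)) := by
        simp only [sum_neg_distrib, mul_neg]
    _ ≤ ∑ x' : X', ∑ x : ∀ B, X B, ∑ z, w z * p' z x' * (∏ B, pB z B (x B)) *
          -log (w z * p' z x' * ∏ B, qB z B (x B)) := by
        gcongr with x' _ x _
        exact sum_mul_neg_log_sum_le _
          (fun z _ => mul_nonneg (hr0 z x').le (prod_nonneg fun B _ => hpB0 z B _))
          (fun z _ => mul_pos (hr0 z x') (hQ0 z x))
    _ = ∑ z, ∑ x', ∑ x : ∀ B, X B, w z * p' z x' * (∏ B, pB z B (x B)) *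
          -log (w z * p' z x' * ∏ B, qB z B (x B)) :=
        (sum_congr rfl fun x' _ => sum_comm).trans sum_comm
    _ = _ := by
        rw [sum_congr rfl fun z _ => component z, sum_add_distrib, sum_comm]
        simp only [sum_neg_distrib, mul_neg]

/-- Theorem 1 of the paper: for a PC written as a mixture over
latent states z of products of per-bucket distributions and a factor over the
remaining variables X', with q differing from p only in the per-bucket
components, H(p, q) ≤ ∑ B, ∑ z, w z * H(pB z B, qB z B) + H(r),
where r (z, x') = w z * p' z x'. -/
theorem pc_cross_entropy_bound
    {Z ι X' : Type*} [Fintype Z] [Fintype ι] [Fintype X'] [DecidableEq ι]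
    (X : ι → Type*) [∀ B, Fintype (X B)]
    (w : Z → ℝ) (hw0 : ∀ z, 0 < w z) (hw1 : ∑ z, w z = 1)
    (p' : Z → X' → ℝ) (hp'0 : ∀ z x', 0 < p' z x') (hp'1 : ∀ z, ∑ x', p' z x' = 1)
    (pB qB : Z → ∀ B, X B → ℝ)
    (hpB0 : ∀ z B y, 0 ≤ pB z B y) (hpB1 : ∀ z B, ∑ y, pB z B y = 1)
    (hqB0 : ∀ z B y, 0 < qB z B y) (hqB1 : ∀ z B, ∑ y, qB z B y = 1) :
    -∑ x' : X', ∑ x : (∀ B, X B),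
        (∑ z, w z * p' z x' * ∏ B, pB z B (x B)) *
          Real.log (∑ z, w z * p' z x' * ∏ B, qB z B (x B)) ≤
      ∑ B, ∑ z, w z * (-∑ y, pB z B y * Real.log (qB z B y)) +
        (-∑ z, ∑ x', (w z * p' z x') * Real.log (w z * p' z x')) :=
  pc_cross_entropy_bound_general X w hw0 p' hp'0 hp'1 pB qB hpB0 hpB1 hqB0
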